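/- Let q = 2^n, c ∈ F_{q^4} with c^{q^2+1}=1, c ≠ 1, and b ∈ F_{q^4} with v = b^q + b^{q^2}. Assume Tr(c^{1+q} v^{2q}) = 0, where Tr is the relative trace from F_{q^4} to F_q. Then Tr(c^{q+1} v^q)^2 = Tr(c^{q+1}) · Tr(c v^{q+1}). -/

import Mathlib

/-!
Write `σ` for `x ↦ x ^ q`, so that `σ^4 = id` and `Tr = 1 + σ + σ² + σ³`. In characteristic 2
every element of a finite field is a square; if `e ^ 2 = c * σ c`, then `c * σ² c = 1` forces
`e * σ² e = 1` and `c = σ³ e * e`. Put `eᵢ = σⁱ e`, `wᵢ = σⁱ⁺¹ v` and `uᵢ = eᵢ wᵢ`. The hypothesis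
says `(∑ uᵢ) ^ 2 = 0`, hence `u₀ + u₂ = u₁ + u₃`; then `Tr (c * v ^ (q + 1)) = (u₀ + u₂) * (u₁ + u₃)
= (u₀ + u₂) ^ 2` and `Tr (c ^ (q + 1)) = (∑ eᵢ) ^ 2`, while `Tr v = ∑ eᵢ e_{i+2} wᵢ = 0` turns
`Tr (c ^ (q + 1) * v ^ q) = ∑ eᵢ uᵢ` into `(∑ eᵢ) * (u₀ + u₂)`.
-/

def Tr4 {K : Type*} [Field K] (q : ℕ) (x : K) : K :=
  x + x ^ q + x ^ (q ^ 2) + x ^ (q ^ 3)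

section CharTwo

variable {R : Type*} [CommRing R] [CharP R 2]

theorem sq_sum_eq_of_cyclic_relations {e₀ e₁ e₂ e₃ w₀ w₁ w₂ w₃ : R}
    (he₀₂ : e₀ * e₂ = 1) (he₁₃ : e₁ * e₃ = 1)
    (hw : w₀ + w₁ + w₂ + w₃ = 0) (hS : e₀ * w₀ + e₁ * w₁ + e₂ * w₂ + e₃ * w₃ = 0) :
    (e₀ ^ 2 * w₀ + e₁ ^ 2 * w₁ + e₂ ^ 2 * w₂ + e₃ ^ 2 * w₃) ^ 2 =
      (e₀ + e₁ + e₂ + e₃) ^ 2 *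
        (e₃ * e₀ * w₃ * w₀ + e₀ * e₁ * w₀ * w₁ + e₁ * e₂ * w₁ * w₂ + e₂ * e₃ * w₂ * w₃) := by
  have h2 : (2 : R) = 0 := CharTwo.two_eq_zero
  have hℓ : e₀ ^ 2 * w₀ + e₁ ^ 2 * w₁ + e₂ ^ 2 * w₂ + e₃ ^ 2 * w₃ =
      (e₀ + e₁ + e₂ + e₃) * (e₀ * w₀ + e₂ * w₂) := by
    linear_combination (e₁ + e₃) * hS - (w₀ + w₂) * he₀₂ - (w₁ + w₃) * he₁₃ - hw
      - (e₁ + e₃) * (e₀ * w₀ + e₂ * w₂) * h2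
  have hQ : e₃ * e₀ * w₃ * w₀ + e₀ * e₁ * w₀ * w₁ + e₁ * e₂ * w₁ * w₂ + e₂ * e₃ * w₂ * w₃ =
      (e₀ * w₀ + e₂ * w₂) ^ 2 := by
    linear_combination (e₀ * w₀ + e₂ * w₂) * hS - (e₀ * w₀ + e₂ * w₂) ^ 2 * h2
  rw [hℓ, hQ, mul_pow]

def trace4 {S : Type*} [Semiring S] (σ : S →+* S) (x : S) : S :=
  x + σ x + σ (σ x) + σ (σ (σ x))

theorem trace4_sq (σ : R →+* R) (x : R) : trace4 σ (x ^ 2) = trace4 σ x ^ 2 := by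
  simp only [trace4, map_pow, CharTwo.add_sq]

end CharTwo

theorem Tr4_eq_trace4 {K : Type*} [Field K] (p n : ℕ) [ExpChar K p] (x : K) :
    Tr4 (p ^ n) x = trace4 (iterateFrobenius K p n) x := by
  simp only [Tr4, trace4, iterateFrobenius_def, ← pow_mul]
  ring_nf

section OrderFour

variable {K : Type*} [Field K] [CharP K 2] (σ : K →+* K)

theorem mul_map_map_eq_one_of_sq_eq {c e : K}
    (hc : c * σ (σ c) = 1) (he : e ^ 2 = c * σ c) : e * σ (σ e) = 1 := by
  have hc' : σ c * σ (σ (σ c)) = 1 := by simpa only [map_mul, map_one] using congrArg σ hc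
  refine CharTwo.sq_injective ?_
  simp only [mul_pow, ← map_pow, he, map_mul]
  linear_combination σ c * σ (σ (σ c)) * hc + hc'

theorem map_map_map_mul_eq_of_sq_eq (hσ : ∀ x, σ (σ (σ (σ x))) = x) {c e : K}
    (hc : c * σ (σ c) = 1) (he : e ^ 2 = c * σ c) : σ (σ (σ e)) * e = c := by
  have hc' : σ c * σ (σ (σ c)) = 1 := by simpa only [map_mul, map_one] using congrArg σ hc
  refine CharTwo.sq_injective ?_
  simp only [mul_pow, ← map_pow, he, map_mul, hσ]
  linear_combination c ^ 2 * hc'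

theorem trace4_sq_eq_mul_of_trace4_eq_zero (hσ : ∀ x, σ (σ (σ (σ x))) = x) {c e v : K}
    (hc : c * σ (σ c) = 1) (he : e ^ 2 = c * σ c) (hv : trace4 σ v = 0)
    (h : trace4 σ (c * σ c * σ v ^ 2) = 0) :
    trace4 σ (c * σ c * σ v) ^ 2 = trace4 σ (c * σ c) * trace4 σ (c * v * σ v) := by
  have he₀₂ := mul_map_map_eq_one_of_sq_eq σ hc he
  have he₁₃ : σ e * σ (σ (σ e)) = 1 := by
    simpa only [map_mul, map_one, hσ] using congrArg σ he₀₂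
  have hS : trace4 σ (e * σ v) = 0 := by
    rwa [← he, ← mul_pow, trace4_sq, pow_eq_zero_iff two_ne_zero] at h
  rw [← he, trace4_sq, ← map_map_map_mul_eq_of_sq_eq σ hσ hc he]
  simp only [trace4, map_mul, map_pow, hσ] at hv hS ⊢
  linear_combination
    sq_sum_eq_of_cyclic_relations he₀₂ he₁₃ (w₃ := v) (by linear_combination hv) hS

end OrderFour

theorem stmt_14_general (n : ℕ) (q : ℕ) (hq : q = 2 ^ n)
    (K : Type*) [Field K] [Fintype K] (hcard : Fintype.card K = q ^ 4)
    (c : K) (hc : c ^ (q ^ 2 + 1) = 1) (b : K)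
    (h : Tr4 q (c ^ (1 + q) * (b ^ q + b ^ (q ^ 2)) ^ (2 * q)) = 0) :
    Tr4 q (c ^ (q + 1) * (b ^ q + b ^ (q ^ 2)) ^ q) ^ 2 =
      Tr4 q (c ^ (q + 1)) * Tr4 q (c * (b ^ q + b ^ (q ^ 2)) ^ (q + 1)) := by
  subst hq
  have : CharP K 2 := charP_of_card_eq_prime_pow (f := n * 4) (by rw [hcard, pow_mul])
  set σ := iterateFrobenius K 2 n
  have hσ₁ : ∀ x, x ^ 2 ^ n = σ x := fun _ => rfl
  have hσ₂ : ∀ x, x ^ (2 ^ n) ^ 2 = σ (σ x) := fun x => by rw [sq, pow_mul, hσ₁, hσ₁]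
  have hσ : ∀ x, σ (σ (σ (σ x))) = x := fun x => by
    simpa only [← hσ₁, ← pow_mul, hcard, pow_succ, pow_zero, one_mul] using FiniteField.pow_card x
  obtain ⟨e, he⟩ := isSquare_of_charTwo' (c * σ c)
  have hv : trace4 σ (σ b + σ (σ b)) = 0 := by
    simp only [trace4, map_add, hσ]
    linear_combination (σ b + σ (σ b) + σ (σ (σ b)) + b) * (CharTwo.two_eq_zero : (2 : K) = 0)
  simp only [Tr4_eq_trace4, hσ₂, pow_add, pow_one, pow_mul, hσ₁, map_pow] at h hc ⊢
  rw [mul_comm (σ c) c, mul_comm _ (σ b + σ (σ b)), ← mul_assoc]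
  exact trace4_sq_eq_mul_of_trace4_eq_zero σ hσ (by rwa [mul_comm]) (by rw [he, sq]) hv h

theorem stmt_14 (n : ℕ) (hn : 0 < n) (q : ℕ) (hq : q = 2 ^ n)
    (K : Type*) [Field K] [Fintype K] (hcard : Fintype.card K = q ^ 4)
    (c : K) (hc : c ^ (q ^ 2 + 1) = 1) (hc1 : c ≠ 1) (b : K)
    (h : Tr4 q (c ^ (1 + q) * (b ^ q + b ^ (q ^ 2)) ^ (2 * q)) = 0) :
    Tr4 q (c ^ (q + 1) * (b ^ q + b ^ (q ^ 2)) ^ q) ^ 2 =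
      Tr4 q (c ^ (q + 1)) * Tr4 q (c * (b ^ q + b ^ (q ^ 2)) ^ (q + 1)) :=
  stmt_14_general n q hq K hcard c hc b h
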